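/- arXiv:2301.11191 — 3 statements merged into one kernel-verified Lean document; each statement's English description precedes it below -/
import Mathlib

section
/- For all ψ ∈ ℝ with ψ + c₂ ≠ 0 and all s ∈ ℝ, the second structural cancellation condition of the fluid transformation holds in the exact form K·D₁a(ψ,s)·(2·D₂a(ψ,s) + b(ψ)²) + b(ψ)·b'(ψ) = −4κ·s/(ψ+c₂)⁵; in particular this quantity vanishes at s = 0 and is O(s) (i.e. O(|z|²) in the fluid variables). -/
/-- The fluid-transformation function `a(ψ,s) = c₁ − ln 4 + ln((ψ+c₂)²) + κ·s/(ψ+c₂)²`. -/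
noncomputable def fluidA (c₁ c₂ κ : ℝ) (ψ s : ℝ) : ℝ :=
  c₁ - Real.log 4 + Real.log ((ψ + c₂) ^ 2) + κ * s / (ψ + c₂) ^ 2

/-- The fluid-transformation function `b(ψ) = 2/(ψ+c₂)`. -/
noncomputable def fluidB (c₂ : ℝ) (ψ : ℝ) : ℝ := 2 / (ψ + c₂)

/-- `D₁a := ∂a/∂ψ`. -/
noncomputable def D₁a (c₁ c₂ κ : ℝ) (ψ s : ℝ) : ℝ :=
  deriv (fun x => fluidA c₁ c₂ κ x s) ψ

/-- `D₂a := ∂a/∂s`. -/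
noncomputable def D₂a (c₁ c₂ κ : ℝ) (ψ s : ℝ) : ℝ :=
  deriv (fun x => fluidA c₁ c₂ κ ψ x) s

/-- `b' := db/dψ`. -/
noncomputable def fluidB' (c₂ : ℝ) (ψ : ℝ) : ℝ := deriv (fluidB c₂) ψ


lemma D₂a_eq (c₁ c₂ κ ψ s : ℝ) : D₂a c₁ c₂ κ ψ s = κ / (ψ + c₂) ^ 2 := by
  unfold D₂a fluidA
  simp [div_eq_mul_inv, mul_assoc, deriv_const_mul, deriv_add_const, deriv_const_add]

lemma fluidB'_eq (c₂ ψ : ℝ) (hψ : ψ + c₂ ≠ 0) :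
    fluidB' c₂ ψ = -2 / (ψ + c₂) ^ 2 := by
  unfold fluidB' fluidB
  have h1 : HasDerivAt (fun x : ℝ => x + c₂) 1 ψ := (hasDerivAt_id ψ).add_const c₂
  have h2 : HasDerivAt (fun x : ℝ => (x + c₂)⁻¹) (-1 / (ψ + c₂) ^ 2) ψ := h1.inv hψ
  have h3 := h2.const_mul (2 : ℝ)
  simp only [div_eq_mul_inv]
  rw [h3.deriv]
  field_simp

lemma D₁a_eq (c₁ c₂ κ ψ s : ℝ) (hψ : ψ + c₂ ≠ 0) :
    D₁a c₁ c₂ κ ψ s = 2 / (ψ + c₂) - 2 * κ * s / (ψ + c₂) ^ 3 := by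
  unfold D₁a fluidA
  have h1 : HasDerivAt (fun x : ℝ => x + c₂) 1 ψ := (hasDerivAt_id ψ).add_const c₂
  have hsq : HasDerivAt (fun x : ℝ => (x + c₂) ^ 2) (2 * (ψ + c₂)) ψ := by
    have := h1.fun_pow 2
    simpa using this
  have hlog : HasDerivAt (fun x : ℝ => Real.log ((x + c₂) ^ 2))
      (2 * (ψ + c₂) / (ψ + c₂) ^ 2) ψ := by
    have := (Real.hasDerivAt_log (pow_ne_zero 2 hψ)).comp ψ hsq
    rw [show 2 * (ψ + c₂) / (ψ + c₂) ^ 2 = ((ψ + c₂) ^ 2)⁻¹ * (2 * (ψ + c₂)) by ring]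
    exact this
  have hinv : HasDerivAt (fun x : ℝ => κ * s * ((x + c₂) ^ 2)⁻¹)
      (κ * s * (-(2 * (ψ + c₂)) / ((ψ + c₂) ^ 2) ^ 2)) ψ :=
    (hsq.inv (pow_ne_zero 2 hψ)).const_mul (κ * s)
  have h := ((hasDerivAt_const ψ (c₁ - Real.log 4)).add hlog).add hinv
  simp only [div_eq_mul_inv] at *
  have h' : HasDerivAt (fun x => c₁ - Real.log 4 + Real.log ((x + c₂) ^ 2) + κ * s * ((x + c₂) ^ 2)⁻¹) _ ψ := h
  rw [h'.deriv]
  field_simp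
  ring

/-- Second structural cancellation condition: for all `ψ` with `ψ + c₂ ≠ 0` and all `s`,
`K·D₁a(ψ,s)·(2·D₂a(ψ,s) + b(ψ)²) + b(ψ)·b'(ψ) = −4κ·s/(ψ+c₂)⁵`; in particular this
quantity vanishes at `s = 0` and is `O(s)`. -/
theorem fluid_second_cancellation (K c₁ c₂ κ : ℝ)
    (hK : K ∈ Set.Ioo (0 : ℝ) (1 / 3)) (hκ : κ = 1 / K - 2)
    (ψ : ℝ) (hψ : ψ + c₂ ≠ 0) :
    (∀ s : ℝ,
      K * D₁a c₁ c₂ κ ψ s * (2 * D₂a c₁ c₂ κ ψ s + (fluidB c₂ ψ) ^ 2)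
        + fluidB c₂ ψ * fluidB' c₂ ψ = -4 * κ * s / (ψ + c₂) ^ 5) ∧
    K * D₁a c₁ c₂ κ ψ 0 * (2 * D₂a c₁ c₂ κ ψ 0 + (fluidB c₂ ψ) ^ 2)
        + fluidB c₂ ψ * fluidB' c₂ ψ = 0 ∧
    ∃ C > 0, ∀ s : ℝ,
      |K * D₁a c₁ c₂ κ ψ s * (2 * D₂a c₁ c₂ κ ψ s + (fluidB c₂ ψ) ^ 2)
        + fluidB c₂ ψ * fluidB' c₂ ψ| ≤ C * |s| := by
  have hK0 : K ≠ 0 := ne_of_gt hK.1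
  have hKκ : K * (κ + 2) = 1 := by rw [hκ]; field_simp; ring
  have key : ∀ s : ℝ,
      K * D₁a c₁ c₂ κ ψ s * (2 * D₂a c₁ c₂ κ ψ s + (fluidB c₂ ψ) ^ 2)
        + fluidB c₂ ψ * fluidB' c₂ ψ = -4 * κ * s / (ψ + c₂) ^ 5 := by
    intro s
    rw [D₁a_eq c₁ c₂ κ ψ s hψ, D₂a_eq, fluidB'_eq c₂ ψ hψ]
    unfold fluidB
    have step : K * (2 / (ψ + c₂) - 2 * κ * s / (ψ + c₂) ^ 3) *
        (2 * (κ / (ψ + c₂) ^ 2) + (2 / (ψ + c₂)) ^ 2)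
        = (K * (κ + 2)) * ((2 / (ψ + c₂) - 2 * κ * s / (ψ + c₂) ^ 3) * (2 / (ψ + c₂) ^ 2)) := by
      field_simp
    rw [step, hKκ, one_mul]
    field_simp
    ring
  refine ⟨key, ?_, ?_⟩
  · rw [key 0]; simp
  · refine ⟨|4 * κ| / |ψ + c₂| ^ 5 + 1, by positivity, fun s => ?_⟩
    rw [key s]
    have habs : |(-4) * κ * s / (ψ + c₂) ^ 5| = |4 * κ| / |ψ + c₂| ^ 5 * |s| := by
      rw [abs_div, abs_mul, abs_pow, abs_mul, abs_mul, abs_neg]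
      simp [abs_mul]
      ring
    rw [habs]
    have h1 : (0:ℝ) ≤ |s| := abs_nonneg s
    nlinarith [abs_nonneg (4 * κ), pow_pos (abs_pos.mpr hψ) 5,
      div_nonneg (abs_nonneg (4 * κ)) (le_of_lt (pow_pos (abs_pos.mpr hψ) 5))]
end

section
/- Assume α² > ‖β‖², and let ν be either root ν = (1/(‖β‖² − α²))·(−⟨β,u⟩ ± √disc) of the quadratic equation (‖β‖² − α²)ν² + 2⟨β,u⟩ν + (1 + ‖u‖²) = 0, where disc := ⟨β,u⟩² + (1 + ‖u‖²)(α² − ‖β‖²). Define μ := ⟨β,u⟩ + (‖β‖² − α²)·ν. Then in both cases μ·ν < 0. -/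
/-- If `α² > ‖β‖²` and `ν` is either root `(1/(‖β‖²−α²))·(−⟨β,u⟩ ± √disc)` of the
quadratic `(‖β‖²−α²)ν² + 2⟨β,u⟩ν + (1+‖u‖²) = 0`, where
`disc = ⟨β,u⟩² + (1+‖u‖²)(α²−‖β‖²)`, then `μ·ν < 0` for
`μ = ⟨β,u⟩ + (‖β‖²−α²)·ν`. -/
theorem mu_nu_negative {E : Type*} [NormedAddCommGroup E]
    [InnerProductSpace ℝ E] (hdim : Module.finrank ℝ E = 3)
    (α : ℝ) (hα : 0 < α) (β u : E) (hαβ : ‖β‖ ^ 2 < α ^ 2) (ν : ℝ)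
    (hν : ν = 1 / (‖β‖ ^ 2 - α ^ 2) *
        (-(inner ℝ β u : ℝ) +
          Real.sqrt ((inner ℝ β u : ℝ) ^ 2 + (1 + ‖u‖ ^ 2) * (α ^ 2 - ‖β‖ ^ 2))) ∨
      ν = 1 / (‖β‖ ^ 2 - α ^ 2) *
        (-(inner ℝ β u : ℝ) -
          Real.sqrt ((inner ℝ β u : ℝ) ^ 2 + (1 + ‖u‖ ^ 2) * (α ^ 2 - ‖β‖ ^ 2)))) :
    ((inner ℝ β u : ℝ) + (‖β‖ ^ 2 - α ^ 2) * ν) * ν < 0 := by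
  set b : ℝ := (inner ℝ β u : ℝ) with hb
  set c : ℝ := ‖β‖ ^ 2 - α ^ 2 with hc
  have hcneg : c < 0 := by simp [hc]; linarith
  set d : ℝ := b ^ 2 + (1 + ‖u‖ ^ 2) * (α ^ 2 - ‖β‖ ^ 2) with hd
  have hdgt : b ^ 2 < d := by
    have h1 : (0:ℝ) < 1 + ‖u‖ ^ 2 := by positivity
    nlinarith [sq_nonneg ‖u‖]
  set s : ℝ := Real.sqrt d with hs
  have hsb : |b| < s := by
    have : Real.sqrt (b ^ 2) < s := by
      apply Real.sqrt_lt_sqrt (by positivity) hdgt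
    rwa [Real.sqrt_sq_eq_abs] at this
  have habs := abs_lt.mp hsb
  clear_value b c d s
  have hcne : c ≠ 0 := hcneg.ne
  rcases hν with h | h
  · rw [h]
    have : (b + c * (1 / c * (-b + s))) * (1 / c * (-b + s)) = s * (s - b) / c := by
      field_simp [hcne]
      ring_nf
      try tauto
    rw [this]
    apply div_neg_of_pos_of_neg _ hcneg
    nlinarith [habs.1, habs.2]
  · rw [h]
    have : (b + c * (1 / c * (-b - s))) * (1 / c * (-b - s)) = s * (s + b) / c := by
      field_simp [hcne]
      ring_nf
      try tauto
    rw [this]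
    apply div_neg_of_pos_of_neg _ hcneg
    nlinarith [habs.1, habs.2]
end

section
/- Let ψ + c₂ ≠ 0, let M be a symmetric 3×3 real matrix, fix k ∈ {1,2,3}, let u := b(ψ)·z ∈ ℝ³, and consider the 4×4 block matrices Q(ψ,z) as above and B̂ᵏ with blocks B̂ᵏ₀₀ = K·uᵏ, B̂ᵏ₀ⱼ = K·δᵏⱼ, B̂ᵏᵢ₀ = K·δᵏᵢ, B̂ᵏᵢⱼ = uᵏ·Mᵢⱼ. Then at z = 0 one has QᵀB̂ᵏQ = (4K/(ψ+c₂)²)·Cᵏ, where Cᵏ is the 4×4 matrix with blocks Cᵏ₀₀ = 0, Cᵏ₀ⱼ = δᵏⱼ, Cᵏᵢ₀ = δᵏᵢ, Cᵏᵢⱼ = 0; in particular, dividing by the (0,0) entry 4K/(ψ+c₂)² of QᵀB⁰Q at z = 0, w = 0, the normalized spatial principal-part matrix at the background is exactly Cᵏ. -/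
open Matrix

/-- The 4×4 Jacobian-type matrix `Q(ψ,z)` of the fluid transformation, with blocks
`Q₀₀ = D₁a(ψ,|z|²)`, `Q₀ⱼ = 2·D₂a(ψ,|z|²)·zⱼ`, `Qᵢ₀ = b'(ψ)·zⁱ`, `Qᵢⱼ = b(ψ)·δⁱⱼ`. -/
noncomputable def Qmat (c₁ c₂ κ : ℝ) (ψ : ℝ) (z : Fin 3 → ℝ) :
    Matrix (Fin 1 ⊕ Fin 3) (Fin 1 ⊕ Fin 3) ℝ :=
  Matrix.fromBlocks
    (Matrix.of fun _ _ => D₁a c₁ c₂ κ ψ (∑ i, z i ^ 2))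
    (Matrix.of fun _ j => 2 * D₂a c₁ c₂ κ ψ (∑ i, z i ^ 2) * z j)
    (Matrix.of fun i _ => fluidB' c₂ ψ * z i)
    (fluidB c₂ ψ • 1)

/-- The spatial coefficient matrix `B̂ᵏ` with blocks `B̂ᵏ₀₀ = K·uᵏ`, `B̂ᵏ₀ⱼ = K·δᵏⱼ`,
`B̂ᵏᵢ₀ = K·δᵏᵢ`, `B̂ᵏᵢⱼ = uᵏ·Mᵢⱼ`. -/
noncomputable def Bhat (K : ℝ) (k : Fin 3) (u : Fin 3 → ℝ)
    (M : Matrix (Fin 3) (Fin 3) ℝ) :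
    Matrix (Fin 1 ⊕ Fin 3) (Fin 1 ⊕ Fin 3) ℝ :=
  Matrix.fromBlocks
    (Matrix.of fun _ _ => K * u k)
    (Matrix.of fun _ j => K * (if j = k then 1 else 0))
    (Matrix.of fun i _ => K * (if i = k then 1 else 0))
    (u k • M)

/-- The constant symbol matrix `Cᵏ` with blocks `Cᵏ₀₀ = 0`, `Cᵏ₀ⱼ = δᵏⱼ`,
`Cᵏᵢ₀ = δᵏᵢ`, `Cᵏᵢⱼ = 0`. -/
def Cmat (k : Fin 3) : Matrix (Fin 1 ⊕ Fin 3) (Fin 1 ⊕ Fin 3) ℝ :=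
  Matrix.fromBlocks 0
    (Matrix.of fun _ j => if j = k then 1 else 0)
    (Matrix.of fun i _ => if i = k then 1 else 0)
    0

lemma D1a_at_zero (c₁ c₂ κ : ℝ) (ψ : ℝ) (hψ : ψ + c₂ ≠ 0) :
    D₁a c₁ c₂ κ ψ 0 = 2 / (ψ + c₂) := by
  have hfun : (fun x => fluidA c₁ c₂ κ x 0)
      = fun x => c₁ - Real.log 4 + Real.log ((x + c₂) ^ 2) := by
    funext x; simp [fluidA]
  have hsq : (ψ + c₂) ^ 2 ≠ 0 := pow_ne_zero _ hψ
  have h1 : HasDerivAt (fun x : ℝ => (x + c₂) ^ 2) (2 * (ψ + c₂)) ψ := by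
    have := ((hasDerivAt_id ψ).add_const c₂).fun_pow 2
    simpa using this
  have h2 : HasDerivAt (fun x => Real.log ((x + c₂) ^ 2))
      (2 * (ψ + c₂) / (ψ + c₂) ^ 2) ψ := h1.log hsq
  have h3 : HasDerivAt (fun x => c₁ - Real.log 4 + Real.log ((x + c₂) ^ 2))
      (2 * (ψ + c₂) / (ψ + c₂) ^ 2) ψ := h2.const_add _
  have : D₁a c₁ c₂ κ ψ 0 = 2 * (ψ + c₂) / (ψ + c₂) ^ 2 := by
    rw [D₁a, hfun]; exact h3.deriv
  rw [this]; field_simp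

/-- For `ψ + c₂ ≠ 0`, `M` symmetric, `k ∈ {1,2,3}` and `u = b(ψ)·z`: at `z = 0` one
has `QᵀB̂ᵏQ = (4K/(ψ+c₂)²)·Cᵏ`; in particular, dividing by the `(0,0)` entry
`4K/(ψ+c₂)²` of `QᵀB⁰Q` at `z = 0, w = 0`, the normalized spatial principal-part
matrix at the background is exactly `Cᵏ`. -/
theorem transformed_spatial_coefficient_at_background (K c₁ c₂ κ : ℝ)
    (hK : K ∈ Set.Ioo (0 : ℝ) (1 / 3)) (hκ : κ = 1 / K - 2)
    (ψ : ℝ) (hψ : ψ + c₂ ≠ 0)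
    (M : Matrix (Fin 3) (Fin 3) ℝ) (hM : Mᵀ = M) (k : Fin 3)
    (z : Fin 3 → ℝ) (hz : z = 0) (u : Fin 3 → ℝ) (hu : u = fun i => fluidB c₂ ψ * z i) :
    (Qmat c₁ c₂ κ ψ z)ᵀ * Bhat K k u M * Qmat c₁ c₂ κ ψ z =
      (4 * K / (ψ + c₂) ^ 2) • Cmat k ∧
    (4 * K / (ψ + c₂) ^ 2)⁻¹ •
        ((Qmat c₁ c₂ κ ψ z)ᵀ * Bhat K k u M * Qmat c₁ c₂ κ ψ z) = Cmat k := by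
  subst hz hu
  have hsq : (ψ + c₂) ^ 2 ≠ 0 := pow_ne_zero _ hψ
  have hd1 := D1a_at_zero c₁ c₂ κ ψ hψ
  have hmain : (Qmat c₁ c₂ κ ψ 0)ᵀ * Bhat K k (fun i => fluidB c₂ ψ * (0:Fin 3 → ℝ) i) M
      * Qmat c₁ c₂ κ ψ 0 = (4 * K / (ψ + c₂) ^ 2) • Cmat k := by
    ext i j
    rcases i with i | i <;> rcases j with j | j <;>
      simp [Qmat, Bhat, Cmat, Matrix.mul_apply, Fintype.sum_sum_type,
        Fin.sum_univ_three, Matrix.one_apply, hd1, fluidB, mul_comm] <;>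
      split_ifs <;>
      simp_all <;>
      field_simp <;> ring
  refine ⟨hmain, ?_⟩
  rw [hmain, smul_smul, inv_mul_cancel₀, one_smul]
  have hK0 : K ≠ 0 := ne_of_gt hK.1
  positivity
end
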